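/- Let I = {1,…,b}, let P = P(I^ℕ) be the Borel probability measures on I^ℕ with the weak topology, and let S ⊂ P be a countable dense subset such that ν[y] > 0 for every ν ∈ S and y ∈ I^*. For ν ∈ S and n ∈ ℕ define R_{ν,n} = ∪_{k≥n} ∩_{y∈I^k} T_y^{−1} U(ν, 1/k), where T_y(μ) = μ_y is defined on {μ ∈ P : μ[y] > 0} and U(ν,ε) is the open π-ball of radius ε around ν. Then R_{ν,n} is open and dense in P. -/

import Mathlib

open MeasureTheory Filter Topology Set

noncomputable section

/-- The tree `I^ℕ`, `I = {1,…,b}`, as the space of sequences `ℕ → Fin b`. -/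
abbrev SeqI (b : ℕ) := ℕ → Fin b

/-- The cylinder `[y]` generated by a word `y ∈ I^k`. -/
def cylinder {b k : ℕ} (y : Fin k → Fin b) : Set (SeqI b) :=
  {x | ∀ i : Fin k, x i.1 = y i}

/-- The word `x|k` of the first `k` letters of `x`. -/
def prefixWord {b : ℕ} (x : SeqI b) (k : ℕ) : Fin k → Fin b := fun i => x i.1

/-- `μ_y`: the normalized restriction of `μ` to `[y]`, shifted back to `I^ℕ`;
it satisfies `μ_y[z] = μ[yz]/μ[y]`. -/
def submeasure {b k : ℕ} (μ : Measure (SeqI b)) (y : Fin k → Fin b) : Measure (SeqI b) :=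
  (μ (cylinder y))⁻¹ • Measure.map (fun x n => x (n + k)) (μ.restrict (cylinder y))

/-- `ν` is a micromeasure of `μ` at `x`: there exist `n_i ↗ ∞` with `μ_{x|n_i} → ν`
weakly (on the compact space `I^ℕ`, weak convergence is tested against all
continuous functions). -/
def IsMicromeasure {b : ℕ} (μ : Measure (SeqI b)) (x : SeqI b) (ν : Measure (SeqI b)) : Prop :=
  ∃ n : ℕ → ℕ, StrictMono n ∧ (∀ i, μ (cylinder (prefixWord x (n i))) ≠ 0) ∧
    ∀ φ : SeqI b → ℝ, Continuous φ →
      Tendsto (fun i => ∫ z, φ z ∂(submeasure μ (prefixWord x (n i)))) atTop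
        (𝓝 (∫ z, φ z ∂ν))


/-- The metric `d(x,y) = 2^{-(x∧y)}` on `I^ℕ`, where `x∧y` is the first index at
which `x` and `y` differ. -/
noncomputable def seqDist {b : ℕ} (x y : SeqI b) : ℝ :=
  open scoped Classical in
  if x = y then 0 else (2:ℝ) ^ (-(PiNat.firstDiff x y : ℤ))

/-- The metric `π(μ,ν) = sup |∫φ dμ − ∫φ dν|`, the sup over functions `φ : I^ℕ → ℝ`
with Lipschitz constant ≤ 1 (w.r.t. `seqDist`) and `‖φ‖_∞ ≤ 1`. -/
def piDist {b : ℕ} (μ ν : Measure (SeqI b)) : ℝ :=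
  ⨆ φ ∈ {φ : SeqI b → ℝ | (∀ x, |φ x| ≤ 1) ∧ ∀ x y, |φ x - φ y| ≤ seqDist x y},
    |∫ x, φ x ∂μ - ∫ x, φ x ∂ν|

/-- `R_{ν,n} = ∪_{k≥n} ∩_{y∈I^k} T_y⁻¹ U(ν,1/k)`, where `T_y(μ) = μ_y` is defined on
`{μ : μ[y] > 0}` and `U(ν,ε)` is the open `π`-ball around `ν`. -/
def Rmicro {b : ℕ} (ν : Measure (SeqI b)) (n : ℕ) : Set (ProbabilityMeasure (SeqI b)) :=
  ⋃ k ∈ Ici n, ⋂ y : Fin k → Fin b,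
    {μ | (μ : Measure (SeqI b)) (cylinder y) ≠ 0 ∧
      piDist (submeasure (μ : Measure (SeqI b)) y) ν < 1 / (k:ℝ)}

/-!
Openness. Cylinders are clopen, so `μ ↦ μ[w]` is weakly continuous, and so is `μ ↦ μ_y[w]`
where `μ[y] > 0`. A test function of `π` is within `2⁻ᵐ` of a function constant on the
cylinders of length `m`, whence `π(ρ, σ) ≤ ∑_{|w| = m} |ρ[w] - σ[w]| + 2·2⁻ᵐ`. Hence
`μ ↦ π(μ_y, ν)` is continuous on `{μ[y] > 0}`, and each set in the definition of `R_{ν,n}` is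
open.

Density. Given `μ` and `k`, place a copy of `ν` below every cylinder `[y]`, `|y| = k`, with mass
`(1 - ε) μ[y] + ε b⁻ᵏ`, `ε = 1/(k+1)`. For the resulting measure `μ'` every `μ'_y` with
`|y| = k` equals `ν`, so `μ' ∈ R_{ν,n}` once `k ≥ n`; its level-`k` cylinder masses are
`2ε`-close to those of `μ` in `ℓ¹`, and the same discretization, applied to a uniformly
continuous function, shows `μ' → μ` weakly as `k → ∞`.
-/

variable {b : ℕ}

section Cylinders

lemma mem_piNatCylinder_of_mem_cylinder {k : ℕ} {y : Fin k → Fin b} {x x' : SeqI b}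
    (hx : x ∈ cylinder y) (hx' : x' ∈ cylinder y) : x' ∈ PiNat.cylinder x k :=
  fun i hi => (hx' ⟨i, hi⟩).trans (hx ⟨i, hi⟩).symm

lemma isClopen_cylinder {k : ℕ} (y : Fin k → Fin b) : IsClopen (cylinder y) := by
  have : cylinder y = ⋂ i : Fin k, (fun x : SeqI b => x i) ⁻¹' {y i} := by
    ext; simp [_root_.cylinder]
  rw [this]
  exact isClopen_iInter_of_finite fun i => (isClopen_discrete _).preimage (continuous_apply _)

lemma measurableSet_cylinder {k : ℕ} (y : Fin k → Fin b) : MeasurableSet (cylinder y) :=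
  (isClopen_cylinder y).isClosed.measurableSet

lemma pairwise_disjoint_cylinder (k : ℕ) :
    Pairwise (Function.onFun Disjoint fun y : Fin k → Fin b => cylinder y) := by
  refine fun y y' hne => Set.disjoint_left.2 fun x hx hx' => hne (funext fun i => ?_)
  rw [← hx i, ← hx' i]

lemma iUnion_cylinder (k : ℕ) : ⋃ y : Fin k → Fin b, cylinder y = univ :=
  eq_univ_of_forall fun x => mem_iUnion.2 ⟨prefixWord x k, fun _ => rfl⟩

lemma sum_measureReal_cylinder (μ : Measure (SeqI b)) [IsProbabilityMeasure μ] (k : ℕ) :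
    ∑ y : Fin k → Fin b, μ.real (cylinder y) = 1 := by
  rw [← measureReal_iUnion_fintype (pairwise_disjoint_cylinder k) measurableSet_cylinder,
    iUnion_cylinder, probReal_univ]

lemma integral_eq_sum_setIntegral_cylinder (μ : Measure (SeqI b)) {f : SeqI b → ℝ}
    (hf : Integrable f μ) (k : ℕ) :
    ∫ x, f x ∂μ = ∑ y : Fin k → Fin b, ∫ x in cylinder y, f x ∂μ := by
  rw [← integral_iUnion_fintype measurableSet_cylinder (pairwise_disjoint_cylinder k)
    fun _ => hf.integrableOn, iUnion_cylinder, setIntegral_univ]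

def prepend {k : ℕ} (y : Fin k → Fin b) (z : SeqI b) : SeqI b :=
  fun n => if h : n < k then y ⟨n, h⟩ else z (n - k)

lemma continuous_prepend {k : ℕ} (y : Fin k → Fin b) : Continuous (prepend y) := by
  refine continuous_pi fun n => ?_
  unfold prepend
  split
  · exact continuous_const
  · exact continuous_apply _

lemma prepend_mem_cylinder {k : ℕ} (y : Fin k → Fin b) (z : SeqI b) :
    prepend y z ∈ cylinder y := fun i => dif_pos i.2

lemma shift_prepend {k : ℕ} (y : Fin k → Fin b) (z : SeqI b) :
    (fun n => prepend y z (n + k)) = z := by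
  funext n
  simp [prepend]

lemma continuous_shift (k : ℕ) : Continuous fun (x : SeqI b) n => x (n + k) :=
  continuous_pi fun n => continuous_apply (n + k)

lemma prepend_preimage_cylinder_inter_shift_preimage {k : ℕ} (y y' : Fin k → Fin b)
    (s : Set (SeqI b)) :
    prepend y ⁻¹' (cylinder y' ∩ (fun x n => x (n + k)) ⁻¹' s) = if y = y' then s else ∅ := by
  split_ifs with h
  · subst h
    ext z
    simp [prepend_mem_cylinder, shift_prepend]
  · refine eq_empty_of_forall_notMem fun z hz => h (funext fun i => ?_)
    rw [← hz.1 i]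
    exact (dif_pos i.2 : prepend y z i = y i).symm

end Cylinders

section Discretization

lemma abs_integral_sub_sum_le {f : SeqI b → ℝ} (hf : Continuous f) {δ : ℝ} {k : ℕ}
    (hosc : ∀ x, ∀ x' ∈ PiNat.cylinder x k, |f x' - f x| ≤ δ)
    (ρ : Measure (SeqI b)) [IsProbabilityMeasure ρ] (r : (Fin k → Fin b) → SeqI b)
    (hr : ∀ w : Fin k → Fin b, r w ∈ cylinder w) :
    |∫ x, f x ∂ρ - ∑ w, ρ.real (cylinder w) * f (r w)| ≤ δ := by
  have hfi : Integrable f ρ := hf.integrable_of_hasCompactSupport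
    (HasCompactSupport.of_compactSpace _)
  have hcell : ∀ w : Fin k → Fin b,
      |∫ x in cylinder w, f x ∂ρ - ρ.real (cylinder w) * f (r w)|
        ≤ δ * ρ.real (cylinder w) := by
    intro w
    rw [← smul_eq_mul, ← setIntegral_const,
      ← integral_sub hfi.integrableOn (integrable_const _)]
    simpa only [Real.norm_eq_abs] using norm_setIntegral_le_of_norm_le_const
      (f := fun x => f x - f (r w)) (measure_lt_top ρ _) fun x hx => by
        simpa only [Real.norm_eq_abs] using
          hosc (r w) x (mem_piNatCylinder_of_mem_cylinder (hr w) hx)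
  calc |∫ x, f x ∂ρ - ∑ w, ρ.real (cylinder w) * f (r w)|
      = |∑ w, (∫ x in cylinder w, f x ∂ρ - ρ.real (cylinder w) * f (r w))| := by
        rw [integral_eq_sum_setIntegral_cylinder ρ hfi k, Finset.sum_sub_distrib]
    _ ≤ ∑ w, δ * ρ.real (cylinder w) :=
        (Finset.abs_sum_le_sum_abs _ _).trans (Finset.sum_le_sum fun w _ => hcell w)
    _ = δ := by rw [← Finset.mul_sum, sum_measureReal_cylinder, mul_one]

lemma abs_integral_sub_integral_le {f : SeqI b → ℝ} (hf : Continuous f) {C δ : ℝ} {k : ℕ}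
    (hC : ∀ x, |f x| ≤ C) (hosc : ∀ x, ∀ x' ∈ PiNat.cylinder x k, |f x' - f x| ≤ δ)
    (ρ σ : Measure (SeqI b)) [IsProbabilityMeasure ρ] [IsProbabilityMeasure σ] :
    |∫ x, f x ∂ρ - ∫ x, f x ∂σ|
      ≤ C * ∑ w : Fin k → Fin b, |ρ.real (cylinder w) - σ.real (cylinder w)| + 2 * δ := by
  obtain ⟨x₀⟩ := nonempty_of_isProbabilityMeasure ρ
  set r : (Fin k → Fin b) → SeqI b := fun w => prepend w x₀
  have hr : ∀ w : Fin k → Fin b, r w ∈ cylinder w := fun w => prepend_mem_cylinder w x₀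
  have hsum : |∑ w, ρ.real (cylinder w) * f (r w) - ∑ w, σ.real (cylinder w) * f (r w)|
      ≤ C * ∑ w : Fin k → Fin b, |ρ.real (cylinder w) - σ.real (cylinder w)| := by
    rw [← Finset.sum_sub_distrib, Finset.mul_sum]
    refine (Finset.abs_sum_le_sum_abs _ _).trans (Finset.sum_le_sum fun w _ => ?_)
    rw [← sub_mul, abs_mul, mul_comm]
    exact mul_le_mul_of_nonneg_right (hC _) (abs_nonneg _)
  have hρ := abs_integral_sub_sum_le hf hosc ρ r hr
  have hσ := abs_integral_sub_sum_le hf hosc σ r hr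
  have htri₁ := abs_sub_le (∫ x, f x ∂ρ) (∑ w, ρ.real (cylinder w) * f (r w)) (∫ x, f x ∂σ)
  have htri₂ := abs_sub_le (∑ w, ρ.real (cylinder w) * f (r w))
    (∑ w, σ.real (cylinder w) * f (r w)) (∫ x, f x ∂σ)
  rw [abs_sub_comm] at hσ
  linarith

lemma exists_abs_sub_le_of_mem_cylinder {f : SeqI b → ℝ} (hf : Continuous f) {ε : ℝ}
    (hε : 0 < ε) : ∃ m, ∀ x, ∀ x' ∈ PiNat.cylinder x m, |f x' - f x| ≤ ε := by
  -- `PiNat.metricSpace` induces the product topology, so compactness gives uniform continuity.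
  let _ : MetricSpace (SeqI b) := PiNat.metricSpace
  obtain ⟨δ, hδ, h⟩ := Metric.uniformContinuous_iff.1
    (CompactSpace.uniformContinuous_of_continuous hf) ε hε
  obtain ⟨m, hm⟩ := exists_pow_lt_of_lt_one hδ (by norm_num : (1 / 2 : ℝ) < 1)
  exact ⟨m, fun x x' hx' => (h ((PiNat.mem_cylinder_iff_dist_le.1 hx').trans_lt hm)).le⟩

end Discretization

section PiDist

lemma seqDist_eq_dist (x y : SeqI b) : seqDist x y = PiNat.dist.dist x y := by
  unfold seqDist
  split_ifs with h
  · rw [h, PiNat.dist_self]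
  · rw [PiNat.dist_eq_of_ne h, zpow_neg, zpow_natCast, one_div, inv_pow]

def testFunctions (b : ℕ) : Set (SeqI b → ℝ) :=
  {φ | (∀ x, |φ x| ≤ 1) ∧ ∀ x y, |φ x - φ y| ≤ seqDist x y}

lemma continuous_of_mem_testFunctions {φ : SeqI b → ℝ} (hφ : φ ∈ testFunctions b) :
    Continuous φ := by
  let _ : MetricSpace (SeqI b) := PiNat.metricSpace
  refine (LipschitzWith.of_dist_le_mul (K := 1) fun x y => ?_).continuous
  simpa [Real.dist_eq, seqDist_eq_dist] using hφ.2 x y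

lemma abs_sub_le_of_mem_testFunctions {φ : SeqI b → ℝ} (hφ : φ ∈ testFunctions b) {k : ℕ}
    (x : SeqI b) : ∀ x' ∈ PiNat.cylinder x k, |φ x' - φ x| ≤ (1 / 2) ^ k := fun x' hx' =>
  (hφ.2 x' x).trans ((seqDist_eq_dist x' x).trans_le (PiNat.mem_cylinder_iff_dist_le.1 hx'))

lemma piDist_le_of_forall {μ ν : Measure (SeqI b)} {B : ℝ} (hB : 0 ≤ B)
    (h : ∀ φ ∈ testFunctions b, |∫ x, φ x ∂μ - ∫ x, φ x ∂ν| ≤ B) : piDist μ ν ≤ B :=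
  Real.iSup_le (fun φ => Real.iSup_le (h φ) hB) hB

lemma abs_integral_sub_le_piDist {φ : SeqI b → ℝ} (hφ : φ ∈ testFunctions b)
    (μ ν : Measure (SeqI b)) [IsProbabilityMeasure μ] [IsProbabilityMeasure ν] :
    |∫ x, φ x ∂μ - ∫ x, φ x ∂ν| ≤ piDist μ ν := by
  have hbound : ∀ ψ ∈ testFunctions b, |∫ x, ψ x ∂μ - ∫ x, ψ x ∂ν| ≤ 2 := fun ψ hψ => by
    simpa [_root_.cylinder] using abs_integral_sub_integral_le (k := 0)
      (continuous_of_mem_testFunctions hψ) hψ.1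
      (fun x => abs_sub_le_of_mem_testFunctions hψ x) μ ν
  refine le_ciSup_of_le ⟨2, ?_⟩ φ (le_ciSup_of_le ⟨2, ?_⟩ hφ le_rfl)
  · rintro _ ⟨ψ, rfl⟩
    exact Real.iSup_le (hbound ψ) zero_le_two
  · rintro _ ⟨hψ, rfl⟩
    exact hbound φ hψ

lemma piDist_nonneg (μ ν : Measure (SeqI b)) [IsProbabilityMeasure μ]
    [IsProbabilityMeasure ν] : 0 ≤ piDist μ ν :=
  (abs_nonneg _).trans (abs_integral_sub_le_piDist (φ := 0)
    ⟨by simp, fun x y => by simpa [seqDist_eq_dist] using PiNat.dist_nonneg x y⟩ μ ν)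

lemma piDist_self (μ : Measure (SeqI b)) [IsProbabilityMeasure μ] : piDist μ μ = 0 :=
  le_antisymm (piDist_le_of_forall le_rfl fun _ _ => by simp) (piDist_nonneg μ μ)

lemma piDist_triangle (ρ σ τ : Measure (SeqI b)) [IsProbabilityMeasure ρ]
    [IsProbabilityMeasure σ] [IsProbabilityMeasure τ] :
    piDist ρ τ ≤ piDist ρ σ + piDist σ τ :=
  piDist_le_of_forall (add_nonneg (piDist_nonneg ρ σ) (piDist_nonneg σ τ)) fun _ hφ =>
    (abs_sub_le _ _ _).trans
      (add_le_add (abs_integral_sub_le_piDist hφ ρ σ) (abs_integral_sub_le_piDist hφ σ τ))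

lemma piDist_le_sum_add (ρ σ : Measure (SeqI b)) [IsProbabilityMeasure ρ]
    [IsProbabilityMeasure σ] (m : ℕ) :
    piDist ρ σ ≤ ∑ w : Fin m → Fin b, |ρ.real (cylinder w) - σ.real (cylinder w)|
      + 2 * (1 / 2) ^ m :=
  piDist_le_of_forall (by positivity) fun _ hφ => by
    simpa using abs_integral_sub_integral_le (continuous_of_mem_testFunctions hφ) hφ.1
      (fun x => abs_sub_le_of_mem_testFunctions hφ x) ρ σ

end PiDist

section Openness

lemma submeasure_apply {k : ℕ} (μ : Measure (SeqI b)) (y : Fin k → Fin b) {s : Set (SeqI b)}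
    (hs : MeasurableSet s) :
    submeasure μ y s = (μ (cylinder y))⁻¹ * μ (cylinder y ∩ (fun x n => x (n + k)) ⁻¹' s) := by
  rw [submeasure, Measure.smul_apply, smul_eq_mul,
    Measure.map_apply (continuous_shift k).measurable hs,
    Measure.restrict_apply ((continuous_shift k).measurable hs), inter_comm]

lemma isProbabilityMeasure_submeasure {k : ℕ} {μ : Measure (SeqI b)} [IsFiniteMeasure μ]
    {y : Fin k → Fin b} (h : μ (cylinder y) ≠ 0) : IsProbabilityMeasure (submeasure μ y) :=
  ⟨by simpa [submeasure_apply μ y MeasurableSet.univ] using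
    ENNReal.inv_mul_cancel h (measure_ne_top μ _)⟩

lemma submeasure_real_apply {k : ℕ} (μ : Measure (SeqI b)) [IsFiniteMeasure μ]
    (y : Fin k → Fin b) {s : Set (SeqI b)} (hs : MeasurableSet s) :
    (submeasure μ y).real s
      = μ.real (cylinder y ∩ (fun x n => x (n + k)) ⁻¹' s) / μ.real (cylinder y) := by
  rw [measureReal_def, submeasure_apply μ y hs, ENNReal.toReal_mul, ENNReal.toReal_inv,
    inv_mul_eq_div, measureReal_def, measureReal_def]

lemma continuous_measureReal_of_isClopen {Ω : Type*} [MeasurableSpace Ω] [TopologicalSpace Ω]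
    [OpensMeasurableSpace Ω] [HasOuterApproxClosed Ω] {E : Set Ω} (hE : IsClopen E) :
    Continuous fun μ : ProbabilityMeasure Ω => (μ : Measure Ω).real E := by
  refine continuous_iff_continuousAt.2 fun μ => ?_
  simp only [ProbabilityMeasure.measureReal_eq_coe_coeFn]
  exact (NNReal.continuous_coe.tendsto _).comp
    (ProbabilityMeasure.tendsto_measure_of_isClopen_of_tendsto tendsto_id hE)

lemma continuousAt_submeasure_real {k : ℕ} {y : Fin k → Fin b}
    {μ₀ : ProbabilityMeasure (SeqI b)} (h₀ : (μ₀ : Measure (SeqI b)) (cylinder y) ≠ 0)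
    {s : Set (SeqI b)} (hs : IsClopen s) :
    ContinuousAt
      (fun μ : ProbabilityMeasure (SeqI b) => (submeasure (μ : Measure (SeqI b)) y).real s) μ₀ := by
  simp_rw [submeasure_real_apply _ y hs.isClosed.measurableSet]
  exact (continuous_measureReal_of_isClopen
    ((isClopen_cylinder y).inter (hs.preimage (continuous_shift k)))).continuousAt.div
    (continuous_measureReal_of_isClopen (isClopen_cylinder y)).continuousAt
    ((measureReal_ne_zero_iff).2 h₀)

lemma isOpen_setOf_piDist_submeasure_lt (ν : Measure (SeqI b)) [IsProbabilityMeasure ν]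
    {k : ℕ} (y : Fin k → Fin b) (r : ℝ) :
    IsOpen {μ : ProbabilityMeasure (SeqI b) | (μ : Measure (SeqI b)) (cylinder y) ≠ 0 ∧
      piDist (submeasure (μ : Measure (SeqI b)) y) ν < r} := by
  rw [isOpen_iff_mem_nhds]
  rintro μ₀ ⟨h₀, hr⟩
  have := isProbabilityMeasure_submeasure h₀
  set c := piDist (submeasure (μ₀ : Measure (SeqI b)) y) ν
  obtain ⟨m, hm⟩ : ∃ m : ℕ, 2 * (1 / 2 : ℝ) ^ m < (r - c) / 2 := by
    obtain ⟨m, hm⟩ := exists_pow_lt_of_lt_one (by linarith : 0 < (r - c) / 4)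
      (by norm_num : (1 / 2 : ℝ) < 1)
    exact ⟨m, by linarith⟩
  set D : ProbabilityMeasure (SeqI b) → ℝ := fun μ => ∑ w : Fin m → Fin b,
    |(submeasure (μ : Measure (SeqI b)) y).real (cylinder w)
      - (submeasure (μ₀ : Measure (SeqI b)) y).real (cylinder w)|
  have hD : ∀ᶠ μ in 𝓝 μ₀, D μ < (r - c) / 2 := by
    refine (tendsto_finsetSum _ fun w _ =>
      ((continuousAt_submeasure_real h₀ (isClopen_cylinder w)).sub continuousAt_const).abs)
      |>.eventually_lt_const ?_
    simp only [Pi.sub_apply, sub_self, abs_zero, Finset.sum_const_zero]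
    linarith
  have hpos : ∀ᶠ μ : ProbabilityMeasure (SeqI b) in 𝓝 μ₀,
      (μ : Measure (SeqI b)).real (cylinder y) ≠ 0 :=
    (continuous_measureReal_of_isClopen (isClopen_cylinder y)).continuousAt.eventually_ne
      ((measureReal_ne_zero_iff).2 h₀)
  filter_upwards [hD, hpos] with μ hμD hμ
  rw [measureReal_ne_zero_iff] at hμ
  have := isProbabilityMeasure_submeasure hμ
  refine ⟨hμ, ?_⟩
  calc piDist (submeasure (μ : Measure (SeqI b)) y) ν
      ≤ piDist (submeasure (μ : Measure (SeqI b)) y) (submeasure (μ₀ : Measure (SeqI b)) y)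
        + c := piDist_triangle _ _ _
    _ ≤ D μ + 2 * (1 / 2) ^ m + c := by gcongr; exact piDist_le_sum_add _ _ m
    _ < r := by linarith

theorem isOpen_Rmicro (ν : Measure (SeqI b)) [IsProbabilityMeasure ν] (n : ℕ) :
    IsOpen (Rmicro ν n) :=
  isOpen_biUnion fun _ _ => isOpen_iInter_of_finite fun y =>
    isOpen_setOf_piDist_submeasure_lt ν y _

end Openness

section Graft

/-- The uniform term `ε b⁻ᵏ`, `ε = 1/(k+1)`, makes every weight positive, so that the conditional
measures of the graft are defined on every cylinder of length `k`. -/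
def graftWeight (μ : Measure (SeqI b)) {k : ℕ} (y : Fin k → Fin b) : ℝ :=
  (1 - 1 / (k + 1)) * μ.real (cylinder y) + 1 / (k + 1) * ((b : ℝ) ^ k)⁻¹

def graft (μ ν : Measure (SeqI b)) (k : ℕ) : Measure (SeqI b) :=
  ∑ y : Fin k → Fin b, ENNReal.ofReal (graftWeight μ y) • ν.map (prepend y)

lemma graft_apply_cylinder_inter (μ ν : Measure (SeqI b)) {k : ℕ} (y : Fin k → Fin b)
    {s : Set (SeqI b)} (hs : MeasurableSet s) :
    graft μ ν k (cylinder y ∩ (fun x n => x (n + k)) ⁻¹' s)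
      = ENNReal.ofReal (graftWeight μ y) * ν s := by
  have hmeas : MeasurableSet (cylinder y ∩ (fun x n => x (n + k)) ⁻¹' s) :=
    (measurableSet_cylinder y).inter ((continuous_shift k).measurable hs)
  simp only [graft, Measure.coe_finsetSum, Finset.sum_apply, Measure.smul_apply, smul_eq_mul,
    Measure.map_apply (continuous_prepend _).measurable hmeas,
    prepend_preimage_cylinder_inter_shift_preimage]
  simp [apply_ite ν, Finset.sum_ite_eq']

lemma graft_apply_cylinder (μ ν : Measure (SeqI b)) [IsProbabilityMeasure ν] {k : ℕ}
    (y : Fin k → Fin b) : graft μ ν k (cylinder y) = ENNReal.ofReal (graftWeight μ y) := by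
  simpa using graft_apply_cylinder_inter μ ν y MeasurableSet.univ

variable [NeZero b]

lemma sum_inv_pow_card (k : ℕ) : ∑ _y : Fin k → Fin b, ((b : ℝ) ^ k)⁻¹ = 1 := by
  have : (b : ℝ) ^ k ≠ 0 := pow_ne_zero _ (Nat.cast_ne_zero.2 (NeZero.ne b))
  simp [this]

lemma graftWeight_pos (μ : Measure (SeqI b)) {k : ℕ} (y : Fin k → Fin b) :
    0 < graftWeight μ y := by
  have : (1 : ℝ) / (k + 1) ≤ 1 := by rw [div_le_one (by positivity)]; linarith
  have : 0 < (b : ℝ) := by exact_mod_cast Nat.pos_of_neZero b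
  unfold graftWeight
  positivity

lemma sum_graftWeight (μ : Measure (SeqI b)) [IsProbabilityMeasure μ] (k : ℕ) :
    ∑ y : Fin k → Fin b, graftWeight μ y = 1 := by
  simp only [graftWeight]
  rw [Finset.sum_add_distrib, ← Finset.mul_sum, ← Finset.mul_sum, sum_measureReal_cylinder,
    sum_inv_pow_card]
  ring

lemma sum_abs_graftWeight_sub_le (μ : Measure (SeqI b)) [IsProbabilityMeasure μ] (k : ℕ) :
    ∑ y : Fin k → Fin b, |graftWeight μ y - μ.real (cylinder y)| ≤ 2 * (1 / (k + 1)) := by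
  have hy : ∀ y : Fin k → Fin b, |graftWeight μ y - μ.real (cylinder y)|
      ≤ 1 / (k + 1) * ((b : ℝ) ^ k)⁻¹ + 1 / (k + 1) * μ.real (cylinder y) := by
    intro y
    have : 0 ≤ μ.real (cylinder y) := measureReal_nonneg
    have : 0 ≤ ((b : ℝ) ^ k)⁻¹ := by positivity
    have : 0 ≤ 1 / ((k : ℝ) + 1) := by positivity
    rw [abs_le, graftWeight]
    constructor <;> nlinarith
  refine (Finset.sum_le_sum fun y _ => hy y).trans_eq ?_
  rw [Finset.sum_add_distrib, ← Finset.mul_sum, ← Finset.mul_sum, sum_inv_pow_card,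
    sum_measureReal_cylinder]
  ring

instance isProbabilityMeasure_graft (μ ν : Measure (SeqI b)) [IsProbabilityMeasure μ]
    [IsProbabilityMeasure ν] (k : ℕ) : IsProbabilityMeasure (graft μ ν k) := by
  constructor
  rw [← iUnion_cylinder k, measure_iUnion (pairwise_disjoint_cylinder k) measurableSet_cylinder,
    tsum_fintype]
  simp_rw [graft_apply_cylinder]
  rw [← ENNReal.ofReal_sum_of_nonneg fun y _ => (graftWeight_pos μ y).le, sum_graftWeight,
    ENNReal.ofReal_one]

lemma submeasure_graft (μ ν : Measure (SeqI b)) [IsProbabilityMeasure ν] {k : ℕ}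
    (y : Fin k → Fin b) : submeasure (graft μ ν k) y = ν := by
  ext s hs
  rw [submeasure_apply _ y hs, graft_apply_cylinder_inter μ ν y hs, graft_apply_cylinder,
    ← mul_assoc, ENNReal.inv_mul_cancel (by simpa using graftWeight_pos μ y) ENNReal.ofReal_ne_top,
    one_mul]

lemma graft_real_cylinder (μ ν : Measure (SeqI b)) [IsProbabilityMeasure ν] {k : ℕ}
    (y : Fin k → Fin b) : (graft μ ν k).real (cylinder y) = graftWeight μ y := by
  rw [measureReal_def, graft_apply_cylinder, ENNReal.toReal_ofReal (graftWeight_pos μ y).le]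

def MeasureTheory.ProbabilityMeasure.graft (μ ν : ProbabilityMeasure (SeqI b)) (k : ℕ) :
    ProbabilityMeasure (SeqI b) :=
  ⟨_root_.graft μ ν k, inferInstance⟩

@[simp]
lemma MeasureTheory.ProbabilityMeasure.toMeasure_graft (μ ν : ProbabilityMeasure (SeqI b))
    (k : ℕ) : (μ.graft ν k : Measure (SeqI b)) = _root_.graft μ ν k :=
  rfl

theorem tendsto_graft (μ ν : ProbabilityMeasure (SeqI b)) :
    Tendsto (μ.graft ν) atTop (𝓝 μ) := by
  rw [ProbabilityMeasure.tendsto_iff_forall_integral_tendsto]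
  intro f
  rw [Metric.tendsto_nhds]
  intro ε hε
  obtain ⟨m, hm⟩ := exists_abs_sub_le_of_mem_cylinder f.continuous (by positivity : 0 < ε / 4)
  have hsmall : ∀ᶠ k : ℕ in atTop, ‖f‖ * (2 * (1 / ((k : ℝ) + 1))) < ε / 2 :=
    ((tendsto_one_div_add_atTop_nhds_zero_nat.const_mul 2).const_mul ‖f‖).eventually_lt_const
      (by simpa using half_pos hε)
  filter_upwards [eventually_ge_atTop m, hsmall] with k hk hk'
  have hosc : ∀ x, ∀ x' ∈ PiNat.cylinder x k, |f x' - f x| ≤ ε / 4 :=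
    fun x x' hx' => hm x x' (PiNat.cylinder_anti x hk hx')
  rw [Real.dist_eq, ProbabilityMeasure.toMeasure_graft]
  have hbound : ∀ x, |f x| ≤ ‖f‖ := fun x =>
    (Real.norm_eq_abs _).symm.trans_le (f.norm_coe_le_norm x)
  refine (abs_integral_sub_integral_le f.continuous hbound hosc (graft μ ν k) μ).trans_lt ?_
  simp only [graft_real_cylinder]
  have := mul_le_mul_of_nonneg_left (sum_abs_graftWeight_sub_le (μ : Measure (SeqI b)) k)
    (norm_nonneg f)
  linarith

end Graft

lemma neZero_of_isProbabilityMeasure (μ : Measure (SeqI b)) [IsProbabilityMeasure μ] :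
    NeZero b :=
  let ⟨x⟩ := nonempty_of_isProbabilityMeasure μ
  ⟨(Fin.pos (x 0)).ne'⟩

theorem dense_Rmicro (ν : ProbabilityMeasure (SeqI b)) (n : ℕ) :
    Dense (Rmicro (ν : Measure (SeqI b)) n) := by
  intro μ
  have := neZero_of_isProbabilityMeasure (μ : Measure (SeqI b))
  refine mem_closure_of_tendsto (tendsto_graft μ ν) ?_
  filter_upwards [eventually_ge_atTop (max n 1)] with k hk
  refine mem_iUnion₂.2 ⟨k, le_of_max_le_left hk, mem_iInter.2 fun y => ⟨?_, ?_⟩⟩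
  · simpa [graft_apply_cylinder] using graftWeight_pos (μ : Measure (SeqI b)) y
  · have : (0 : ℝ) < k := by exact_mod_cast le_of_max_le_right hk
    simp only [ProbabilityMeasure.toMeasure_graft, submeasure_graft, piDist_self]
    positivity

theorem stmt_13_general (b : ℕ) (ν : ProbabilityMeasure (SeqI b)) (n : ℕ) :
    IsOpen (Rmicro (ν : Measure (SeqI b)) n) ∧
    Dense (Rmicro (ν : Measure (SeqI b)) n) :=
  ⟨isOpen_Rmicro (ν : Measure (SeqI b)) n, dense_Rmicro ν n⟩

/-- if `S ⊂ P(I^ℕ)` is countable, dense, and consists of measures giving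
positive mass to every cylinder, then for every `ν ∈ S` and `n ∈ ℕ` the set `R_{ν,n}`
is open and dense in `P(I^ℕ)`. -/
theorem stmt_13 (b : ℕ) (hb : 0 < b)
    (S : Set (ProbabilityMeasure (SeqI b))) (hScount : S.Countable) (hSdense : Dense S)
    (hSpos : ∀ ν ∈ S, ∀ (k : ℕ) (y : Fin k → Fin b),
      (ν : Measure (SeqI b)) (cylinder y) ≠ 0)
    (ν : ProbabilityMeasure (SeqI b)) (hν : ν ∈ S) (n : ℕ) (hn : 0 < n) :
    IsOpen (Rmicro (ν : Measure (SeqI b)) n) ∧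
    Dense (Rmicro (ν : Measure (SeqI b)) n) :=
  stmt_13_general b ν n

end
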